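/- arXiv:0902.4780 — 5 statements merged into one kernel-verified Lean document; each statement's English description precedes it below -/
import Mathlib

section
/- Along any solution (x(t), y(t)) of the ODE system dx/dt = (1−x)(μ − x²y²), dy/dt = (1−y)(μ − x²y²) with x(t), y(t) ∈ (0,1) for all t, the ratio (1 − y(t))/(1 − x(t)) is constant in t. -/
/-!
Both `1 - x` and `1 - y` solve the same linear equation `u' = -(μ - x²y²) u`, so their quotient
has derivative zero wherever `1 - x` does not vanish.
-/

theorem div_eq_of_hasDerivAt_mul_self {𝕜 : Type*} [RCLike 𝕜] {f g c : 𝕜 → 𝕜}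
    (hf : ∀ t, HasDerivAt f (c t * f t) t) (hg : ∀ t, HasDerivAt g (c t * g t) t)
    (hg0 : ∀ t, g t ≠ 0) (s t : 𝕜) : f t / g t = f s / g s := by
  have hquot : ∀ t, HasDerivAt (fun t => f t / g t) 0 t := fun t =>
    ((hf t).div (hg t) (hg0 t)).congr_deriv (by field_simp; ring)
  exact is_const_of_deriv_eq_zero (fun t => (hquot t).differentiableAt)
    (fun t => (hquot t).deriv) t s

theorem hasDerivAt_one_sub_of_deriv_eq {u c : ℝ → ℝ} (hu : Differentiable ℝ u)
    (hu' : ∀ t, deriv u t = (1 - u t) * c t) (t : ℝ) :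
    HasDerivAt (fun t => 1 - u t) (-c t * (1 - u t)) t := by
  refine ((hu t).hasDerivAt.const_sub 1).congr_deriv ?_
  rw [hu' t]
  ring

theorem ratio_constant_along_ODE_general (μ : ℝ) (x y : ℝ → ℝ)
    (hx : Differentiable ℝ x) (hy : Differentiable ℝ y)
    (hxr : ∀ t, x t ∈ Set.Ioo (0:ℝ) 1)
    (hx' : ∀ t, deriv x t = (1 - x t) * (μ - (x t)^2 * (y t)^2))
    (hy' : ∀ t, deriv y t = (1 - y t) * (μ - (x t)^2 * (y t)^2)) :
    ∀ s t : ℝ, (1 - y t) / (1 - x t) = (1 - y s) / (1 - x s) :=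
  div_eq_of_hasDerivAt_mul_self (hasDerivAt_one_sub_of_deriv_eq hy hy')
    (hasDerivAt_one_sub_of_deriv_eq hx hx') (fun t => sub_ne_zero.mpr (hxr t).2.ne')

theorem ratio_constant_along_ODE (μ : ℝ) (hμ : 0 < μ) (x y : ℝ → ℝ)
    (hx : Differentiable ℝ x) (hy : Differentiable ℝ y)
    (hxr : ∀ t, x t ∈ Set.Ioo (0:ℝ) 1) (hyr : ∀ t, y t ∈ Set.Ioo (0:ℝ) 1)
    (hx' : ∀ t, deriv x t = (1 - x t) * (μ - (x t)^2 * (y t)^2))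
    (hy' : ∀ t, deriv y t = (1 - y t) * (μ - (x t)^2 * (y t)^2)) :
    ∀ s t : ℝ, (1 - y t) / (1 - x t) = (1 - y s) / (1 - x s) :=
  ratio_constant_along_ODE_general μ x y hx hy hxr hx' hy'
end

section
/- Let μ ∈ (0,1), g(u) = ((1−u) + sqrt((1−u)² + 4√μ·u))/2, and for x, y ∈ (0,1) set x* = g((1−x)/(1−y)) and y* = g((1−y)/(1−x)). Then x* y* = √μ and (1−y*)/(1−x*) = (1−y)/(1−x). -/
theorem projection_on_curve (μ x y : ℝ) (hμ : μ ∈ Set.Ioo (0:ℝ) 1)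
    (hx : x ∈ Set.Ioo (0:ℝ) 1) (hy : y ∈ Set.Ioo (0:ℝ) 1)
    (g : ℝ → ℝ) (hg : ∀ u, g u = ((1 - u) + Real.sqrt ((1 - u)^2 + 4 * Real.sqrt μ * u))/2)
    (xs ys : ℝ) (hxs : xs = g ((1 - x)/(1 - y))) (hys : ys = g ((1 - y)/(1 - x))) :
    xs * ys = Real.sqrt μ ∧ (1 - ys)/(1 - xs) = (1 - y)/(1 - x) := by
  obtain ⟨hμ0, hμ1⟩ := hμ
  obtain ⟨hx0, hx1⟩ := hx
  obtain ⟨hy0, hy1⟩ := hy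
  set s := Real.sqrt μ with hsdef
  have hs0 : 0 < s := Real.sqrt_pos.mpr hμ0
  have hs1 : s < 1 := by
    rw [hsdef, show (1:ℝ) = Real.sqrt 1 by simp]
    exact Real.sqrt_lt_sqrt hμ0.le hμ1
  have ha : 0 < 1 - x := by linarith
  have hb : 0 < 1 - y := by linarith
  set u := (1 - x)/(1 - y) with hu
  have hu0 : 0 < u := div_pos ha hb
  have huv : (1 - y)/(1 - x) = 1/u := by
    rw [hu]; field_simp
  set D := (1 - u)^2 + 4 * s * u with hD
  have hD0 : 0 ≤ D := by nlinarith [sq_nonneg (1 - u)]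
  set E := Real.sqrt D with hE
  have hE0 : 0 ≤ E := Real.sqrt_nonneg _
  have hE2 : E^2 = D := Real.sq_sqrt hD0
  have hE' : Real.sqrt ((1 - 1/u)^2 + 4 * s * (1/u)) = E / u := by
    have h1 : (1 - 1/u)^2 + 4 * s * (1/u) = D / u^2 := by
      field_simp [hD]; ring
    rw [h1, Real.sqrt_div hD0, Real.sqrt_sq hu0.le]
  have hElt : E < 1 + u := by
    have h2 : D < (1 + u)^2 := by nlinarith
    calc E = Real.sqrt D := rfl
      _ < Real.sqrt ((1 + u)^2) := Real.sqrt_lt_sqrt hD0 h2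
      _ = 1 + u := Real.sqrt_sq (by linarith)
  have hxs' : xs = (1 - u + E)/2 := by rw [hxs, hg]
  have hys' : ys = (1 - 1/u + E/u)/2 := by rw [hys, hg, huv, hE']
  constructor
  · rw [hxs', hys']
    field_simp
    nlinarith [hE2]
  · rw [hxs', hys', huv]
    have hne : 1 + u - E ≠ 0 := by linarith
    rw [div_eq_div_iff (by intro h; apply hne; field_simp at h ⊢; linarith) hu0.ne']
    field_simp
    ring
end

section
/- Suppose b, x₃, y₃, x, y > 0 with x₃, y₃, x, y < 1, and suppose b²x₃y₃/(xy) > xy. Let M be the 3×3 matrix [[−x₃(1−y₃) − y₃(1−x₃) − 4xy, −4y, −4x], [x(y₃+y)/2, −bx₃/x, x], [y(x₃+x)/2, y, −by₃/y]]. Then det(M) = (−x₃(1−y₃) − y₃(1−x₃) − 4xy)(b²x₃y₃/(xy) − xy) − 4y(x(y₃+y)(by₃/y)/2 + xy(x₃+x)/2) − 4x(xy(y₃+y)/2 + (bx₃/x)·y(x₃+x)/2), and det(M) < 0. -/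
theorem det_M_negative (b x₃ y₃ x y : ℝ) (hb : 0 < b)
    (hx₃ : x₃ ∈ Set.Ioo (0:ℝ) 1) (hy₃ : y₃ ∈ Set.Ioo (0:ℝ) 1)
    (hx : x ∈ Set.Ioo (0:ℝ) 1) (hy : y ∈ Set.Ioo (0:ℝ) 1)
    (h3 : b^2 * x₃ * y₃ / (x * y) > x * y)
    (M : Matrix (Fin 3) (Fin 3) ℝ)
    (hM : M = !![-(x₃ * (1 - y₃)) - y₃ * (1 - x₃) - 4 * x * y, -(4 * y), -(4 * x);
                 x * (y₃ + y) / 2, -(b * x₃ / x), x;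
                 y * (x₃ + x) / 2, y, -(b * y₃ / y)]) :
    M.det = (-(x₃ * (1 - y₃)) - y₃ * (1 - x₃) - 4 * x * y) * (b^2 * x₃ * y₃ / (x * y) - x * y)
      - 4 * y * (x * (y₃ + y) * (b * y₃ / y) / 2 + x * y * (x₃ + x) / 2)
      - 4 * x * (x * y * (y₃ + y) / 2 + (b * x₃ / x) * (y * (x₃ + x)) / 2)
    ∧ M.det < 0 := by
  obtain ⟨hx₃0, hx₃1⟩ := hx₃
  obtain ⟨hy₃0, hy₃1⟩ := hy₃
  obtain ⟨hx0, hx1⟩ := hx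
  obtain ⟨hy0, hy1⟩ := hy
  have hdet : M.det = (-(x₃ * (1 - y₃)) - y₃ * (1 - x₃) - 4 * x * y) * (b^2 * x₃ * y₃ / (x * y) - x * y)
      - 4 * y * (x * (y₃ + y) * (b * y₃ / y) / 2 + x * y * (x₃ + x) / 2)
      - 4 * x * (x * y * (y₃ + y) / 2 + (b * x₃ / x) * (y * (x₃ + x)) / 2) := by
    rw [hM, Matrix.det_fin_three]
    simp [Matrix.cons_val_zero, Matrix.cons_val_one]
    field_simp
    ring
  refine ⟨hdet, ?_⟩
  rw [hdet]
  have hA : (-(x₃ * (1 - y₃)) - y₃ * (1 - x₃) - 4 * x * y) < 0 := by nlinarith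
  have hB : (0:ℝ) < b^2 * x₃ * y₃ / (x * y) - x * y := by linarith
  have h1 : (0:ℝ) < 4 * y * (x * (y₃ + y) * (b * y₃ / y) / 2 + x * y * (x₃ + x) / 2) := by
    positivity
  have h2 : (0:ℝ) < 4 * x * (x * y * (y₃ + y) / 2 + (b * x₃ / x) * (y * (x₃ + x)) / 2) := by
    positivity
  nlinarith [mul_pos_of_neg_of_neg hA (neg_neg_of_pos hB)]
end

section
/- Suppose b, x₃, y₃, x, y > 0 with x₃, y₃ < 1 and b²x₃y₃/(xy) > xy. Let m₁₁ = −x₃(1−y₃) − y₃(1−x₃) − 4xy and b₂ = −(bx₃/x)m₁₁ + 2xy(y₃+y) + (b²x₃y₃/(xy) − xy) − (by₃/y)m₁₁ + 2xy(x₃+x). Then b₂ > 0. -/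
theorem b2_positive (b x₃ y₃ x y : ℝ) (hb : 0 < b)
    (hx₃ : 0 < x₃) (hy₃ : 0 < y₃) (hx : 0 < x) (hy : 0 < y)
    (hx₃1 : x₃ < 1) (hy₃1 : y₃ < 1)
    (h3 : b^2 * x₃ * y₃ / (x * y) > x * y)
    (m₁₁ b₂ : ℝ)
    (hm : m₁₁ = -(x₃ * (1 - y₃)) - y₃ * (1 - x₃) - 4 * x * y)
    (hb₂ : b₂ = -(b * x₃ / x) * m₁₁ + 2 * x * y * (y₃ + y)
      + (b^2 * x₃ * y₃ / (x * y) - x * y) - (b * y₃ / y) * m₁₁ + 2 * x * y * (x₃ + x)) :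
    0 < b₂ := by
  have hm0 : m₁₁ < 0 := by
    rw [hm]; nlinarith [mul_pos hx hy, mul_pos hx₃ (sub_pos.mpr hy₃1),
      mul_pos hy₃ (sub_pos.mpr hx₃1)]
  have h1 : 0 < -(b * x₃ / x) * m₁₁ := by
    have : 0 < b * x₃ / x := by positivity
    nlinarith
  have h2 : 0 < -(b * y₃ / y) * m₁₁ := by
    have : 0 < b * y₃ / y := by positivity
    nlinarith
  have h4 : 0 < 2 * x * y * (y₃ + y) := by positivity
  have h5 : 0 < 2 * x * y * (x₃ + x) := by positivity
  rw [hb₂]; linarith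
end

section
/- Fix b ∈ (0, 0.01] and x₃ ∈ [0,1) with 1 − x₃ ≥ √b. With d₂ = −(1−x₃)², d₁ = 2(1−x₃)² − 4b(1−x₃) + 2b²(1+x₃), d₀ = −(1−x₃)² + 4b(1−x₃) − b²(5−2x₃) + b³, one has d₁² − 4d₀d₂ = 4b²(1−x₃)²(1+4x₃)·M where M = 1 − (b/(1−x₃))·(3+5x₃)/(1+4x₃) + (b²/(1−x₃)²)·(1+x₃)²/(1+4x₃), and moreover 1 ≥ M ≥ 1 − 3b/(1−x₃) ≥ 0. -/
/-! Clearing the denominator `(1 - x)² (1 + 4x)` of `M` turns everything into statements about the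
cubic `N = (1 - x)²(1 + 4x) - b(1 - x)(3 + 5x) + b²(1 + x)²`: the discriminant is `4b² N` by
expansion, and the bounds on `M` become `b((1 - x)(3 + 5x) - b(1 + x)²) ≥ 0` and
`7bx(1 - x) + b²(1 + x)² ≥ 0`. All three bounds only need `3b ≤ 1 - x`, which follows from
`b = √b · √b ≤ 0.1 (1 - x)`. -/

open Real

lemma le_mul_of_sqrt_le {b c u : ℝ} (hb : 0 ≤ b) (hc : 0 ≤ c) (hbc : b ≤ c ^ 2)
    (h : √b ≤ u) : b ≤ c * u :=
  calc b = √b * √b := (mul_self_sqrt hb).symm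
    _ ≤ c * u := mul_le_mul (sqrt_le_iff.mpr ⟨hc, hbc⟩) h (sqrt_nonneg b) hc

namespace Subfunctionalization

def reducedDiscriminant (b x : ℝ) : ℝ :=
  (1 - x) ^ 2 * (1 + 4 * x) - b * (1 - x) * (3 + 5 * x) + b ^ 2 * (1 + x) ^ 2

noncomputable def discriminantFactor (b x : ℝ) : ℝ :=
  1 - (b / (1 - x)) * (3 + 5 * x) / (1 + 4 * x) + (b ^ 2 / (1 - x) ^ 2) * (1 + x) ^ 2 / (1 + 4 * x)

variable {b x : ℝ}

theorem discriminant_eq_reducedDiscriminant (b x : ℝ) :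
    (2 * (1 - x) ^ 2 - 4 * b * (1 - x) + 2 * b ^ 2 * (1 + x)) ^ 2
      - 4 * (-(1 - x) ^ 2 + 4 * b * (1 - x) - b ^ 2 * (5 - 2 * x) + b ^ 3) * (-(1 - x) ^ 2)
      = 4 * b ^ 2 * reducedDiscriminant b x := by
  unfold reducedDiscriminant
  ring

theorem discriminantFactor_mul (hx : x ≠ 1) (hw : 1 + 4 * x ≠ 0) :
    discriminantFactor b x * ((1 - x) ^ 2 * (1 + 4 * x)) = reducedDiscriminant b x := by
  have hu : 1 - x ≠ 0 := sub_ne_zero.mpr (Ne.symm hx)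
  -- `field_simp` rewrites `4 * x` to `x * 4` before it looks for nonvanishing denominators
  have hw' : 1 + x * 4 ≠ 0 := by rwa [mul_comm]
  unfold discriminantFactor reducedDiscriminant
  field_simp

theorem discriminantFactor_eq_div (hx : x ≠ 1) (hw : 1 + 4 * x ≠ 0) :
    discriminantFactor b x = reducedDiscriminant b x / ((1 - x) ^ 2 * (1 + 4 * x)) :=
  eq_div_of_mul_eq (by simp [sub_ne_zero.mpr (Ne.symm hx), hw]) (discriminantFactor_mul hx hw)

theorem reducedDiscriminant_le (hb : 0 ≤ b) (hx : 0 ≤ x) (h : 3 * b ≤ 1 - x) :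
    reducedDiscriminant b x ≤ (1 - x) ^ 2 * (1 + 4 * x) := by
  have hx1 : x ≤ 1 := by linarith
  have key : b * (1 + x) ^ 2 ≤ (1 - x) * (3 + 5 * x) := by
    nlinarith [mul_le_mul_of_nonneg_left (show (1 + x) ^ 2 ≤ 4 by nlinarith) hb]
  unfold reducedDiscriminant
  nlinarith [mul_le_mul_of_nonneg_left key hb]

theorem reducedDiscriminant_eq (b x : ℝ) :
    reducedDiscriminant b x
      = (1 - x) * (1 + 4 * x) * (1 - x - 3 * b) + 7 * b * x * (1 - x) + b ^ 2 * (1 + x) ^ 2 := by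
  unfold reducedDiscriminant
  ring

theorem discriminantFactor_le_one (hb : 0 ≤ b) (hx : 0 ≤ x) (h : 3 * b ≤ 1 - x) (hx1 : x < 1) :
    discriminantFactor b x ≤ 1 := by
  have hD : 0 < (1 - x) ^ 2 * (1 + 4 * x) := by nlinarith
  rw [discriminantFactor_eq_div hx1.ne (by linarith), div_le_one hD]
  exact reducedDiscriminant_le hb hx h

theorem one_sub_le_discriminantFactor (hb : 0 ≤ b) (hx : 0 ≤ x) (hx1 : x < 1) :
    1 - 3 * b / (1 - x) ≤ discriminantFactor b x := by
  have hu : 0 < 1 - x := by linarith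
  have hD : 0 < (1 - x) ^ 2 * (1 + 4 * x) := by positivity
  have hlhs : 1 - 3 * b / (1 - x)
      = (1 - x) * (1 + 4 * x) * (1 - x - 3 * b) / ((1 - x) ^ 2 * (1 + 4 * x)) := by
    field_simp
  rw [discriminantFactor_eq_div hx1.ne (by linarith), hlhs, reducedDiscriminant_eq]
  gcongr
  have : 0 ≤ 7 * b * x * (1 - x) := by positivity
  nlinarith [sq_nonneg (b * (1 + x))]

end Subfunctionalization

open Subfunctionalization in
theorem discriminant_identity (b x₃ : ℝ) (hb : 0 < b) (hb1 : b ≤ 0.01)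
    (hx₃ : x₃ ∈ Set.Ico (0:ℝ) 1) (hgap : 1 - x₃ ≥ Real.sqrt b)
    (d₀ d₁ d₂ M : ℝ)
    (hd₂ : d₂ = -(1 - x₃)^2)
    (hd₁ : d₁ = 2 * (1 - x₃)^2 - 4 * b * (1 - x₃) + 2 * b^2 * (1 + x₃))
    (hd₀ : d₀ = -(1 - x₃)^2 + 4 * b * (1 - x₃) - b^2 * (5 - 2 * x₃) + b^3)
    (hM : M = 1 - (b / (1 - x₃)) * (3 + 5 * x₃) / (1 + 4 * x₃)
      + (b^2 / (1 - x₃)^2) * (1 + x₃)^2 / (1 + 4 * x₃)) :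
    d₁^2 - 4 * d₀ * d₂ = 4 * b^2 * (1 - x₃)^2 * (1 + 4 * x₃) * M ∧
      1 ≥ M ∧ M ≥ 1 - 3 * b / (1 - x₃) ∧ 1 - 3 * b / (1 - x₃) ≥ 0 := by
  obtain ⟨hx0, hx1⟩ := hx₃
  have h3b : 3 * b ≤ 1 - x₃ := by
    have := le_mul_of_sqrt_le hb.le (by norm_num : (0:ℝ) ≤ 0.1) (by linarith) hgap
    linarith
  have hM' : M = discriminantFactor b x₃ := hM
  subst hd₀ hd₁ hd₂ hM'
  refine ⟨?_, discriminantFactor_le_one hb.le hx0 h3b hx1,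
    one_sub_le_discriminantFactor hb.le hx0 hx1,
    sub_nonneg.mpr ((div_le_one (by linarith)).mpr h3b)⟩
  rw [discriminant_eq_reducedDiscriminant,
    ← discriminantFactor_mul (b := b) hx1.ne (by linarith)]
  ring
end
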